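/- The behavioural pseudometric d₁ (the distance d_δ with discount factor δ = 1) is a post-fixed point of Δ: for all states s₁, s₂ of a probabilistic transition system, Δ(d₁)(s₁,s₂) ≤ d₁(s₁,s₂). -/
import Mathlib


open scoped Classical
open Finset

/-- A probabilistic transition system on a finite state set `S`:
`prob s s'` is the probability of a transition from `s` to `s'`;
each row sums to `0` or `1`. -/
structure PTS (S : Type) [Fintype S] where
  prob : S → S → ℝ
  nonneg : ∀ s s', 0 ≤ prob s s'
  le_one : ∀ s s', prob s s' ≤ 1
  sum01 : ∀ s, (∑ s', prob s s') = 0 ∨ (∑ s', prob s s') = 1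

/-- The logic `L`: `true`, diamond, conjunction, negation and `φ ⊖ q` with `q ∈ [0,1] ∩ ℚ`. -/
inductive Formula : Type where
  | tt : Formula
  | diam : Formula → Formula
  | conj : Formula → Formula → Formula
  | neg : Formula → Formula
  | sub : Formula → {q : ℚ // 0 ≤ q ∧ q ≤ 1} → Formula

variable {S : Type} [Fintype S]

/-- The real-valued interpretation `⟦φ⟧_δ` of a formula. -/
noncomputable def interp (M : PTS S) (δ : ℝ) : Formula → S → ℝ
  | .tt, _ => 1
  | .diam φ, s => δ * ∑ s', M.prob s s' * interp M δ φ s'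
  | .conj φ ψ, s => min (interp M δ φ s) (interp M δ ψ s)
  | .neg φ, s => 1 - interp M δ φ s
  | .sub φ q, s => max (interp M δ φ s - ((q : ℚ) : ℝ)) 0

/-- The behavioural distance `d_δ(s₁,s₂) = sup_{φ ∈ L} ⟦φ⟧_δ(s₁) − ⟦φ⟧_δ(s₂)`. -/
noncomputable def pdist (M : PTS S) (δ : ℝ) (s₁ s₂ : S) : ℝ :=
  ⨆ φ : Formula, (interp M δ φ s₁ - interp M δ φ s₂)

/-- `d` is a 1-bounded pseudometric on `S`. -/
def IsPseudo (d : S → S → ℝ) : Prop :=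
  (∀ s₁ s₂, 0 ≤ d s₁ s₂ ∧ d s₁ s₂ ≤ 1) ∧ (∀ s, d s s = 0) ∧
  (∀ s₁ s₂, d s₁ s₂ = d s₂ s₁) ∧ (∀ s₁ s₂ s₃, d s₁ s₃ ≤ d s₁ s₂ + d s₂ s₃)

/-- The order `⊑` on 1-bounded pseudometrics: `d₁ ⊑ d₂` iff `d₁ ≥ d₂` pointwise. -/
def ple (d₁ d₂ : S → S → ℝ) : Prop := ∀ s₁ s₂, d₂ s₁ s₂ ≤ d₁ s₁ s₂

/-- `f : S → [0,1]` is nonexpansive with respect to `d`. -/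
def Nonexp (d : S → S → ℝ) (f : S → ℝ) : Prop :=
  (∀ s, 0 ≤ f s ∧ f s ≤ 1) ∧ ∀ s₁ s₂, |f s₁ - f s₂| ≤ d s₁ s₂

/-- The functional `Δ` on 1-bounded pseudometrics. -/
noncomputable def Delta (M : PTS S) (d : S → S → ℝ) (s₁ s₂ : S) : ℝ :=
  if (∑ s, M.prob s₁ s) = 1 ∧ (∑ s, M.prob s₂ s) = 1 then
    sSup {x : ℝ | ∃ f : S → ℝ, Nonexp d f ∧ x = ∑ s, f s * (M.prob s₁ s - M.prob s₂ s)}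
  else if (∑ s, M.prob s₁ s) = 0 ∧ (∑ s, M.prob s₂ s) = 0 then 0
  else 1

/-- `R` is a probabilistic bisimulation on `M`. -/
def IsBisim (M : PTS S) (R : S → S → Prop) : Prop :=
  Equivalence R ∧ ∀ s₁ s₂, R s₁ s₂ → ∀ e : S,
    (∑ s, if R e s then M.prob s₁ s else 0) = (∑ s, if R e s then M.prob s₂ s else 0)

/-- `s₁` and `s₂` are probabilistic bisimilar. -/
def Bisimilar (M : PTS S) (s₁ s₂ : S) : Prop := ∃ R, IsBisim M R ∧ R s₁ s₂

/-- The modal depth of a formula. -/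
def Formula.depth : Formula → ℕ
  | .tt => 0
  | .diam φ => φ.depth + 1
  | .conj φ ψ => max φ.depth ψ.depth
  | .neg φ => φ.depth
  | .sub φ _ => φ.depth

/-- The ratio `ρ(d₁,d₂) = min { d₂(s₁,s₂)/d₁(s₁,s₂) | d₂(s₁,s₂) > 0 }`,
with the minimum of the empty set taken to be `1`. -/
noncomputable def rho (d₁ d₂ : S → S → ℝ) : ℝ :=
  if {x : ℝ | ∃ s₁ s₂, 0 < d₂ s₁ s₂ ∧ x = d₂ s₁ s₂ / d₁ s₁ s₂}.Nonempty
  then sInf {x : ℝ | ∃ s₁ s₂, 0 < d₂ s₁ s₂ ∧ x = d₂ s₁ s₂ / d₁ s₁ s₂} else 1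

/-- `μ = min { d(s₁,s₂) | d(s₁,s₂) > 0 }`, with the minimum of the empty set taken to be `1`. -/
noncomputable def muMin (d : S → S → ℝ) : ℝ :=
  if {x : ℝ | ∃ s₁ s₂, 0 < d s₁ s₂ ∧ x = d s₁ s₂}.Nonempty
  then sInf {x : ℝ | ∃ s₁ s₂, 0 < d s₁ s₂ ∧ x = d s₁ s₂} else 1

/-- The iterates `d⁰ = ⊤`, `d^{n+1} = Δ(d^n)`. -/
noncomputable def iterd (M : PTS S) : ℕ → S → S → ℝ
  | 0 => fun _ _ => 0
  | n + 1 => Delta M (iterd M n)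

/-- The termination probabilities `τₙ`. -/
noncomputable def term (M : PTS S) : ℕ → S → ℝ
  | 0, _ => 0
  | n + 1, s => if (∑ s', M.prob s s') = 0 then 1 else ∑ s', M.prob s s' * term M n s'


section Aux

instance : Inhabited Formula := ⟨Formula.tt⟩

variable {S : Type} [Fintype S]

lemma row_le_one (M : PTS S) (s : S) : (∑ s', M.prob s s') ≤ 1 := by
  rcases M.sum01 s with h | h <;> simp [h]

lemma interp_bounds (M : PTS S) (φ : Formula) :
    ∀ s : S, 0 ≤ interp M 1 φ s ∧ interp M 1 φ s ≤ 1 := by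
  induction φ with
  | tt => intro s; simp [interp]
  | diam φ ih =>
    intro s
    constructor
    · simp only [interp, one_mul]
      exact Finset.sum_nonneg fun i _ => mul_nonneg (M.nonneg s i) (ih i).1
    · simp only [interp, one_mul]
      calc ∑ s', M.prob s s' * interp M 1 φ s'
          ≤ ∑ s', M.prob s s' * 1 :=
            Finset.sum_le_sum fun i _ => mul_le_mul_of_nonneg_left (ih i).2 (M.nonneg s i)
        _ ≤ 1 := by simpa using row_le_one M s
  | conj φ ψ ih1 ih2 =>
    intro s
    exact ⟨le_min (ih1 s).1 (ih2 s).1, (min_le_left _ _).trans (ih1 s).2⟩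
  | neg φ ih =>
    intro s
    simp only [interp]
    constructor <;> linarith [(ih s).1, (ih s).2]
  | sub φ q ih =>
    intro s
    simp only [interp]
    have hq0 : (0:ℝ) ≤ ((q.1 : ℚ) : ℝ) := by exact_mod_cast q.2.1
    refine ⟨le_max_right _ _, max_le (by linarith [(ih s).2]) zero_le_one⟩

lemma pdist_bddAbove (M : PTS S) (s₁ s₂ : S) :
    BddAbove (Set.range fun φ : Formula => interp M 1 φ s₁ - interp M 1 φ s₂) := by
  refine ⟨1, ?_⟩
  rintro x ⟨φ, rfl⟩
  have h1 := interp_bounds M φ s₁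
  have h2 := interp_bounds M φ s₂
  simp only
  linarith [h1.2, h2.1]

lemma le_pdist (M : PTS S) (s₁ s₂ : S) (φ : Formula) :
    interp M 1 φ s₁ - interp M 1 φ s₂ ≤ pdist M 1 s₁ s₂ :=
  le_ciSup (pdist_bddAbove M s₁ s₂) φ

lemma pdist_nonneg' (M : PTS S) (s₁ s₂ : S) : 0 ≤ pdist M 1 s₁ s₂ := by
  have := le_pdist M s₁ s₂ Formula.tt
  simpa [interp] using this

lemma exists_rat_near1 (x ε : ℝ) (hε : 0 < ε) (h0 : 0 ≤ x) (h1 : x ≤ 1) :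
    ∃ q : ℚ, 0 ≤ q ∧ q ≤ 1 ∧ (q : ℝ) ≤ x ∧ x - ε < q := by
  obtain ⟨q', hq1, hq2⟩ := exists_rat_btwn (show x - ε < x by linarith)
  refine ⟨max q' 0, le_max_right _ _, ?_, ?_, ?_⟩
  · have : ((max q' 0 : ℚ) : ℝ) ≤ 1 := by
      push_cast
      exact max_le (hq2.le.trans h1) zero_le_one
    exact_mod_cast this
  · push_cast
    exact max_le hq2.le h0
  · push_cast
    exact lt_max_of_lt_left hq1

/-- `φ ⊕ q`, with value `min (⟦φ⟧ + q) 1`. -/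
def fplus (φ : Formula) (q : {q : ℚ // 0 ≤ q ∧ q ≤ 1}) : Formula :=
  .neg ((Formula.neg φ).sub q)

lemma interp_fplus (M : PTS S) (φ : Formula) (q : {q : ℚ // 0 ≤ q ∧ q ≤ 1}) (s : S) :
    interp M 1 (fplus φ q) s = min (interp M 1 φ s + ((q.1 : ℚ) : ℝ)) 1 := by
  simp only [fplus, interp]
  rcases le_total (interp M 1 φ s + ((q.1 : ℚ) : ℝ)) 1 with h | h
  · rw [min_eq_left h, max_eq_left (by linarith)]; ring
  · rw [min_eq_right h, max_eq_right (by linarith)]; ring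

/-- `max` of two formulas. -/
def fmax (φ ψ : Formula) : Formula := .neg (.conj (.neg φ) (.neg ψ))

lemma interp_fmax (M : PTS S) (φ ψ : Formula) (s : S) :
    interp M 1 (fmax φ ψ) s = max (interp M 1 φ s) (interp M 1 ψ s) := by
  simp only [fmax, interp]
  rcases le_total (interp M 1 φ s) (interp M 1 ψ s) with h | h
  · rw [max_eq_right h, min_eq_right (by linarith)]; ring
  · rw [max_eq_left h, min_eq_left (by linarith)]; ring

lemma pairwise_approx (M : PTS S) (f : S → ℝ) (hf : Nonexp (pdist M 1) f)
    (s t : S) (ε : ℝ) (hε : 0 < ε) :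
    ∃ φ : Formula, f s - ε ≤ interp M 1 φ s ∧ interp M 1 φ t ≤ f t + ε := by
  have hfs := hf.1 s
  have hft := hf.1 t
  have hle : f s - f t ≤ pdist M 1 s t := (abs_le.mp (hf.2 s t)).2
  have hlt : f s - f t - ε / 2 < ⨆ φ : Formula, (interp M 1 φ s - interp M 1 φ t) := by
    have : f s - f t - ε / 2 < pdist M 1 s t := by linarith
    simpa [pdist] using this
  obtain ⟨φ, hφ⟩ := exists_lt_of_lt_ciSup hlt
  have has := interp_bounds M φ s
  have hat := interp_bounds M φ t
  set a := interp M 1 φ s with ha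
  set b := interp M 1 φ t with hb
  rcases le_or_gt 0 (f t - b) with hc | hc
  · -- shift up by ≈ (f t - b)
    obtain ⟨q, hq0, hq1, hqle, hqlt⟩ :=
      exists_rat_near1 (f t - b) (ε / 2) (by linarith) hc (by linarith [hat.1, hft.2])
    refine ⟨fplus φ ⟨q, hq0, hq1⟩, ?_, ?_⟩
    · rw [interp_fplus]
      exact le_min (by linarith) (by linarith [hfs.2])
    · rw [interp_fplus]
      calc min (b + (q:ℝ)) 1 ≤ b + (q:ℝ) := min_le_left _ _
        _ ≤ f t + ε := by linarith
  · -- shift down by ≈ (b - f t)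
    obtain ⟨q, hq0, hq1, hqle, hqlt⟩ :=
      exists_rat_near1 (b - f t) (ε / 2) (by linarith) (by linarith)
        (by linarith [hat.2, hft.1])
    refine ⟨Formula.sub φ ⟨q, hq0, hq1⟩, ?_, ?_⟩
    · simp only [interp]
      calc f s - ε ≤ a - (q:ℝ) := by linarith
        _ ≤ max (a - (q:ℝ)) 0 := le_max_left _ _
    · simp only [interp]
      exact max_le (by linarith) (by linarith)

lemma min_approx (M : PTS S) (f : S → ℝ) (hf : Nonexp (pdist M 1) f)
    (s : S) (ε : ℝ) (hε : 0 < ε) :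
    ∃ ψ : Formula, f s - ε ≤ interp M 1 ψ s ∧ ∀ t, interp M 1 ψ t ≤ f t + ε := by
  suffices h : ∀ T : Finset S, ∃ ψ : Formula,
      f s - ε ≤ interp M 1 ψ s ∧ ∀ t ∈ T, interp M 1 ψ t ≤ f t + ε by
    obtain ⟨ψ, h1, h2⟩ := h Finset.univ
    exact ⟨ψ, h1, fun t => h2 t (Finset.mem_univ t)⟩
  intro T
  induction T using Finset.induction_on with
  | empty =>
    refine ⟨Formula.tt, ?_, by simp⟩
    simp only [interp]
    linarith [(hf.1 s).2]
  | @insert a T ha ih =>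
    obtain ⟨ψ, h1, h2⟩ := ih
    obtain ⟨φ, g1, g2⟩ := pairwise_approx M f hf s a ε hε
    refine ⟨Formula.conj ψ φ, le_min h1 g1, ?_⟩
    intro t ht
    rcases Finset.mem_insert.mp ht with rfl | ht
    · exact (min_le_right _ _).trans g2
    · exact (min_le_left _ _).trans (h2 t ht)

lemma full_approx (M : PTS S) (f : S → ℝ) (hf : Nonexp (pdist M 1) f)
    (ε : ℝ) (hε : 0 < ε) :
    ∃ φ : Formula, ∀ u, |interp M 1 φ u - f u| ≤ ε := by
  suffices h : ∀ T : Finset S, ∃ φ : Formula,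
      (∀ u, interp M 1 φ u ≤ f u + ε) ∧ ∀ t ∈ T, f t - ε ≤ interp M 1 φ t by
    obtain ⟨φ, h1, h2⟩ := h Finset.univ
    refine ⟨φ, fun u => abs_le.mpr ⟨?_, ?_⟩⟩
    · linarith [h2 u (Finset.mem_univ u)]
    · linarith [h1 u]
  intro T
  induction T using Finset.induction_on with
  | empty =>
    refine ⟨Formula.neg Formula.tt, fun u => ?_, by simp⟩
    simp only [interp]
    linarith [(hf.1 u).1]
  | @insert a T ha ih =>
    obtain ⟨φ, h1, h2⟩ := ih
    obtain ⟨ψ, g1, g2⟩ := min_approx M f hf a ε hε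
    refine ⟨fmax φ ψ, fun u => ?_, fun t ht => ?_⟩
    · rw [interp_fmax]
      exact max_le (h1 u) (g2 u)
    · rw [interp_fmax]
      rcases Finset.mem_insert.mp ht with rfl | ht
      · exact g1.trans (le_max_right _ _)
      · exact (h2 t ht).trans (le_max_left _ _)

end Aux

/-- the behavioural pseudometric `d₁` (discount factor `1`) is a
post-fixed point of `Δ`: `Δ(d₁)(s₁,s₂) ≤ d₁(s₁,s₂)` for all states. -/
theorem stmt8 (S : Type) [Fintype S] (M : PTS S) (s₁ s₂ : S) :
    Delta M (pdist M 1) s₁ s₂ ≤ pdist M 1 s₁ s₂ := by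
  unfold Delta
  split_ifs with h1 h2
  · -- both states have transitions
    apply Real.sSup_le _ (pdist_nonneg' M s₁ s₂)
    rintro x ⟨f, hf, rfl⟩
    refine le_of_forall_pos_le_add fun ε hε => ?_
    obtain ⟨φ, hφ⟩ := full_approx M f hf (ε / 4) (by linarith)
    have habs : ∀ s : S, |M.prob s₁ s - M.prob s₂ s| ≤ M.prob s₁ s + M.prob s₂ s := by
      intro s
      have := abs_sub (M.prob s₁ s) (M.prob s₂ s)
      calc |M.prob s₁ s - M.prob s₂ s| ≤ |M.prob s₁ s| + |M.prob s₂ s| := abs_sub _ _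
        _ = M.prob s₁ s + M.prob s₂ s := by
            rw [abs_of_nonneg (M.nonneg s₁ s), abs_of_nonneg (M.nonneg s₂ s)]
    have key : ∑ s, (f s - interp M 1 φ s) * (M.prob s₁ s - M.prob s₂ s) ≤ ε / 2 := by
      calc ∑ s, (f s - interp M 1 φ s) * (M.prob s₁ s - M.prob s₂ s)
          ≤ ∑ s, (ε / 4) * (M.prob s₁ s + M.prob s₂ s) := by
            refine Finset.sum_le_sum fun s _ => ?_
            calc (f s - interp M 1 φ s) * (M.prob s₁ s - M.prob s₂ s)
                ≤ |(f s - interp M 1 φ s) * (M.prob s₁ s - M.prob s₂ s)| := le_abs_self _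
              _ = |f s - interp M 1 φ s| * |M.prob s₁ s - M.prob s₂ s| := abs_mul _ _
              _ ≤ (ε / 4) * (M.prob s₁ s + M.prob s₂ s) := by
                  apply mul_le_mul _ (habs s) (abs_nonneg _) (by linarith)
                  rw [abs_sub_comm]
                  exact hφ s
        _ = (ε / 4) * ((∑ s, M.prob s₁ s) + ∑ s, M.prob s₂ s) := by
            rw [← Finset.mul_sum, Finset.sum_add_distrib]
        _ = ε / 2 := by rw [h1.1, h1.2]; ring
    have hdiam : ∑ s, interp M 1 φ s * (M.prob s₁ s - M.prob s₂ s)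
        = interp M 1 (Formula.diam φ) s₁ - interp M 1 (Formula.diam φ) s₂ := by
      simp only [interp, one_mul, ← Finset.sum_sub_distrib]
      congr 1
      ext s
      ring
    have hsplit : ∑ s, f s * (M.prob s₁ s - M.prob s₂ s)
        = (∑ s, (f s - interp M 1 φ s) * (M.prob s₁ s - M.prob s₂ s))
          + ∑ s, interp M 1 φ s * (M.prob s₁ s - M.prob s₂ s) := by
      rw [← Finset.sum_add_distrib]
      congr 1
      ext s
      ring
    have hpd := le_pdist M s₁ s₂ (Formula.diam φ)
    calc ∑ s, f s * (M.prob s₁ s - M.prob s₂ s)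
        ≤ ε / 2 + (interp M 1 (Formula.diam φ) s₁ - interp M 1 (Formula.diam φ) s₂) := by
          rw [hsplit, hdiam]; linarith
      _ ≤ pdist M 1 s₁ s₂ + ε := by linarith
  · exact pdist_nonneg' M s₁ s₂
  · -- exactly one of the states has transitions
    rcases M.sum01 s₁ with e1 | e1 <;> rcases M.sum01 s₂ with e2 | e2
    · exact absurd ⟨e1, e2⟩ h2
    · have := le_pdist M s₁ s₂ (Formula.neg (Formula.diam Formula.tt))
      simpa [interp, e1, e2] using this
    · have := le_pdist M s₁ s₂ (Formula.diam Formula.tt)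
      simpa [interp, e1, e2] using this
    · exact absurd ⟨e1, e2⟩ h1
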